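/- Let N be a binary nearly stable network and T a binary phylogenetic tree on the same leaf set. Suppose N contains vertices w, u, v and leaves ℓ, ℓ' such that: w is a tree vertex with children u and ℓ', where ℓ' is a leaf; u is a reticulation whose child is the reticulation v; and the child of v is the leaf ℓ. Define N' as follows: if ℓ and ℓ' are not siblings in T (i.e., they do not have a common parent in T), then N' is obtained from N by deleting the edge (w, u); otherwise N' is obtained from N by deleting the incoming edge of u other than (w, u) and the incoming edge of v other than (u, v). If N displays T, then N' displays T. (Theorem 3(i)) -/

import Mathlib

/-!
Common framework: a binary phylogenetic network is modelled as a directed graph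
on an ambient type `V`, given by a vertex set `verts : Set V`, an adjacency
relation `adj : V → V → Prop` (no parallel edges are possible in this model),
and a root vertex `root`.
-/

/-- The outdegree of a vertex `v`: the number of its out-neighbours. -/
noncomputable def outdeg {V : Type*} (adj : V → V → Prop) (v : V) : ℕ :=
  {u | adj v u}.ncard

/-- The indegree of a vertex `v`: the number of its in-neighbours. -/
noncomputable def indeg {V : Type*} (adj : V → V → Prop) (v : V) : ℕ :=
  {u | adj u v}.ncard

/-- A leaf of the network: a vertex with outdegree 0. -/
def IsLeaf {V : Type*} (verts : Set V) (adj : V → V → Prop) (v : V) : Prop :=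
  v ∈ verts ∧ outdeg adj v = 0

/-- A tree vertex: indegree 1 and outdegree 2. -/
def IsTreeVertex {V : Type*} (adj : V → V → Prop) (v : V) : Prop :=
  indeg adj v = 1 ∧ outdeg adj v = 2

/-- A reticulation: indegree 2 and outdegree 1. -/
def IsReticulation {V : Type*} (adj : V → V → Prop) (v : V) : Prop :=
  indeg adj v = 2 ∧ outdeg adj v = 1

/-- `l` is a directed path from `a` to `b`: a nonempty list of vertices starting
at `a`, ending at `b`, each consecutive pair joined by an edge. -/
def IsPathFromTo {V : Type*} (adj : V → V → Prop) (l : List V) (a b : V) : Prop :=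
  l.Chain' adj ∧ l.head? = some a ∧ l.getLast? = some b

/-- A binary phylogenetic network: a finite DAG with a unique root (the only
vertex of indegree 0) of outdegree 2, in which every vertex is reachable from
the root, every leaf has indegree 1, and every other non-root vertex is either
a tree vertex or a reticulation. -/
structure IsBinaryNetwork {V : Type*} (verts : Set V) (adj : V → V → Prop) (root : V) : Prop where
  finite_verts : verts.Finite
  root_mem : root ∈ verts
  adj_mem : ∀ ⦃u v : V⦄, adj u v → u ∈ verts ∧ v ∈ verts
  acyclic : ∀ v : V, ¬ Relation.TransGen adj v v
  root_indeg : indeg adj root = 0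
  root_outdeg : outdeg adj root = 2
  root_unique : ∀ v ∈ verts, indeg adj v = 0 → v = root
  reach : ∀ v ∈ verts, Relation.ReflTransGen adj root v
  leaf_indeg : ∀ v ∈ verts, outdeg adj v = 0 → indeg adj v = 1
  internal_deg : ∀ v ∈ verts, v ≠ root → outdeg adj v ≠ 0 →
      IsTreeVertex adj v ∨ IsReticulation adj v

/-- `x` is stable: there is a leaf `ℓ` such that `x` lies on every directed
path from the root to `ℓ`. -/
def Stable {V : Type*} (verts : Set V) (adj : V → V → Prop) (root x : V) : Prop :=
  ∃ ℓ, IsLeaf verts adj ℓ ∧ ∀ l : List V, IsPathFromTo adj l root ℓ → x ∈ l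

/-- A network is reticulation-visible if every reticulation is stable. -/
def ReticulationVisible {V : Type*} (verts : Set V) (adj : V → V → Prop) (root : V) : Prop :=
  ∀ v ∈ verts, IsReticulation adj v → Stable verts adj root v

/-- A network is nearly stable if every vertex is stable or all of its parents
are stable. -/
def NearlyStable {V : Type*} (verts : Set V) (adj : V → V → Prop) (root : V) : Prop :=
  ∀ v ∈ verts, Stable verts adj root v ∨ ∀ p : V, adj p v → Stable verts adj root p

/-- `M` (a DAG with vertex set `vertsM` and adjacency `adjM`) displays the
binary phylogenetic tree `T` (with vertex set `vertsT` and adjacency `adjT`,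
whose leaf set equals that of `M`): there are an injective map `φ` from the
vertices of `T` into the vertices of `M` fixing every leaf, and for each edge
`(a, b)` of `T` a directed path `P a b` in `M` from `φ a` to `φ b`, such that
two distinct such paths share no vertices other than common endpoints in the
image of `φ`, and no internal vertex of any path lies in the image of `φ`. -/
def Displays {V : Type*} (vertsM : Set V) (adjM : V → V → Prop)
    (vertsT : Set V) (adjT : V → V → Prop) : Prop :=
  ∃ (φ : V → V) (P : V → V → List V),
    Set.MapsTo φ vertsT vertsM ∧
    Set.InjOn φ vertsT ∧
    (∀ ℓ : V, IsLeaf vertsT adjT ℓ → φ ℓ = ℓ) ∧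
    (∀ a b : V, adjT a b → IsPathFromTo adjM (P a b) (φ a) (φ b)) ∧
    (∀ a b : V, adjT a b → ∀ x ∈ (P a b).tail.dropLast, x ∉ φ '' vertsT) ∧
    (∀ a b a' b' : V, adjT a b → adjT a' b' → (a, b) ≠ (a', b') →
      ∀ x : V, x ∈ P a b → x ∈ P a' b' →
        (x = φ a ∨ x = φ b) ∧ (x = φ a' ∨ x = φ b'))

/-!
Fix an embedding `(φ, P)` of `T` in `N`. The paths from the image of a vertex with two children
to the images of those children leave it along different edges, so `u` and `v`, having outdegree
one, are not images of vertices of `T`. Hence a path through `u` or `v` runs on to `ℓ` and is the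
path into `ℓ`, while the path into `ℓ'` ends with the edge `w → ℓ'`.

If `ℓ` and `ℓ'` are not siblings, no path uses the edge `(w, u)`: otherwise `w` would lie on the
paths into `ℓ` and into `ℓ'` without ending either, so it would be the image of a common parent.
If they are siblings with parent `p`, move the image of `p` down the path to `ℓ'` to `w`, extend
the path into `p` by the abandoned segment and send `p → ℓ` along `w → u → v → ℓ`. All other
paths avoid `u` and `v`, so neither deleted edge is used.
-/

open Relation

namespace List

variable {α : Type*} {R : α → α → Prop} {l : List α} {a b x : α}

theorem IsChain.nodup_of_acyclic (hR : ∀ x, ¬ TransGen R x x) (hl : l.IsChain R) : l.Nodup :=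
  Pairwise.imp (S := (· ≠ ·)) (fun hxy h => hR _ (h ▸ hxy))
    (hl.imp fun _ _ => TransGen.single).pairwise

theorem IsChain.exists_rel_of_mem (hl : l.IsChain R) (hb : l.getLast? = some b) (hx : x ∈ l)
    (hxb : x ≠ b) : ∃ y ∈ l, R x y := by
  induction l with
  | nil => simp at hx
  | cons c t ih =>
    cases t with
    | nil => simp_all
    | cons d t =>
      rcases mem_cons.1 hx with rfl | hx
      · exact ⟨d, by simp, hl.rel⟩
      · obtain ⟨y, hy, hxy⟩ := ih hl.tail (by simpa [getLast?_cons_cons] using hb) hx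
        exact ⟨y, mem_cons_of_mem _ hy, hxy⟩

theorem mem_tail_dropLast_of_ne (ha : l.head? = some a) (hb : l.getLast? = some b) (hx : x ∈ l)
    (hxa : x ≠ a) (hxb : x ≠ b) : x ∈ l.tail.dropLast := by
  obtain ⟨t, rfl⟩ : ∃ t, l = a :: t := by cases l <;> simp_all
  have hxt : x ∈ t := by simpa [hxa] using hx
  have ht : t ≠ [] := ne_nil_of_mem hxt
  rw [getLast?_cons, getLast?_eq_some_getLast ht] at hb
  rw [← dropLast_append_getLast ht] at hxt
  simp_all

theorem Nodup.ne_of_mem_tail_dropLast (hl : l.Nodup) (ha : l.head? = some a)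
    (hb : l.getLast? = some b) (hx : x ∈ l.tail.dropLast) : x ≠ a ∧ x ≠ b := by
  obtain ⟨t, rfl⟩ : ∃ t, l = a :: t := by cases l <;> simp_all
  have ht : t ≠ [] := by rintro rfl; simp at hx
  rw [getLast?_cons, getLast?_eq_some_getLast ht, Option.getD_some, Option.some.injEq] at hb
  refine ⟨fun h => (nodup_cons.1 hl).1 (h ▸ mem_of_mem_dropLast hx), fun h => ?_⟩
  have hnd := (nodup_cons.1 hl).2
  rw [← dropLast_append_getLast ht, hb] at hnd
  exact disjoint_of_nodup_append hnd (h ▸ hx) (mem_singleton_self b)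

end List

theorem IsPathFromTo.exists_eq_append {V : Type*} {adj : V → V → Prop} {l : List V} {a b z : V}
    (hl : IsPathFromTo adj l a b) (hab : a ≠ b) (hz : ∀ y, adj y b → y = z) :
    ∃ R, l = R ++ [b] ∧ R.getLast? = some z := by
  obtain ⟨hc, ha, hb⟩ := hl
  have hne : l ≠ [] := by rintro rfl; simp at ha
  have hlast : l.getLast hne = b := by simpa [List.getLast?_eq_some_getLast hne] using hb
  have hdrop : l.dropLast ≠ [] := by
    intro h
    have := List.dropLast_append_getLast hne
    rw [h, hlast] at this
    rw [← this] at ha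
    simp only [List.nil_append, List.head?_cons, Option.some.injEq] at ha
    exact hab ha.symm
  refine ⟨l.dropLast, ?_, ?_⟩
  · conv_lhs => rw [← List.dropLast_append_getLast hne, hlast]
  · have := hc.rel_getLast_dropLast hdrop
    rw [hlast] at this
    rw [List.getLast?_eq_some_getLast hdrop, hz _ this]

section Degrees

variable {V : Type*} {adj : V → V → Prop} {a b c : V}

theorem eq_of_outdeg_eq_one (h : outdeg adj a = 1) (hb : adj a b) (hc : adj a c) : c = b :=
  (Set.ncard_le_one (Set.finite_of_ncard_ne_zero (h ▸ one_ne_zero : outdeg adj a ≠ 0))).1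
    h.le c hc b hb

theorem eq_of_indeg_eq_one (h : indeg adj a = 1) (hb : adj b a) (hc : adj c a) : c = b :=
  (Set.ncard_le_one (Set.finite_of_ncard_ne_zero (h ▸ one_ne_zero : indeg adj a ≠ 0))).1
    h.le c hc b hb

theorem exists_adj_of_outdeg_eq_one (h : outdeg adj a = 1) : ∃ b, adj a b := by
  obtain ⟨d, hd⟩ := Set.ncard_eq_one.1 h
  exact ⟨d, show d ∈ {y | adj a y} by rw [hd]; rfl⟩

theorem exists_adj_of_indeg_eq_one (h : indeg adj a = 1) : ∃ b, adj b a := by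
  obtain ⟨d, hd⟩ := Set.ncard_eq_one.1 h
  exact ⟨d, show d ∈ {y | adj y a} by rw [hd]; rfl⟩

theorem exists_adj_of_outdeg_eq_two (h : outdeg adj a = 2) :
    ∃ b c, b ≠ c ∧ adj a b ∧ adj a c := by
  obtain ⟨b, c, hbc, hs⟩ := Set.ncard_eq_two.1 h
  exact ⟨b, c, hbc, show b ∈ {y | adj a y} by simp [hs], show c ∈ {y | adj a y} by simp [hs]⟩

theorem eq_or_eq_of_outdeg_eq_two (h : outdeg adj a = 2) (hb : adj a b) (hc : adj a c)
    (hbc : b ≠ c) {d : V} (hd : adj a d) : d = b ∨ d = c := by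
  have hs : {y | adj a y} = {b, c} :=
    (Set.eq_of_subset_of_ncard_le (by simp [Set.insert_subset_iff, hb, hc])
      (by rw [Set.ncard_pair hbc, ← h]; rfl)
      (Set.finite_of_ncard_ne_zero (h ▸ two_ne_zero : outdeg adj a ≠ 0))).symm
  have hd' : d ∈ {y | adj a y} := hd
  rw [hs] at hd'
  simpa using hd'

end Degrees

namespace IsBinaryNetwork

variable {V : Type*} {verts : Set V} {adj : V → V → Prop} {root x y z : V}

theorem irrefl (h : IsBinaryNetwork verts adj root) (x : V) : ¬ adj x x :=
  fun hx => h.acyclic x (.single hx)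

theorem ne_of_adj (h : IsBinaryNetwork verts adj root) (hxy : adj x y) : x ≠ y := by
  rintro rfl
  exact h.irrefl x hxy

theorem not_adj_of_isLeaf (h : IsBinaryNetwork verts adj root) (hx : IsLeaf verts adj x)
    (y : V) : ¬ adj x y := by
  intro hxy
  have hfin : {y | adj x y}.Finite := h.finite_verts.subset fun y hy => (h.adj_mem hy).2
  have hy : y ∈ {y | adj x y} := hxy
  rw [(Set.ncard_eq_zero hfin).1 hx.2] at hy
  exact hy

theorem outdeg_eq_two (h : IsBinaryNetwork verts adj root)
    (htree : ∀ x, ¬ IsReticulation adj x) (hx : x ∈ verts) (hnl : ¬ IsLeaf verts adj x) :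
    outdeg adj x = 2 := by
  by_cases hr : x = root
  · exact hr ▸ h.root_outdeg
  rcases h.internal_deg x hx hr fun h0 => hnl ⟨hx, h0⟩ with ht | hr'
  · exact ht.2
  · exact absurd hr' (htree x)

theorem eq_of_adj_of_adj (h : IsBinaryNetwork verts adj root)
    (htree : ∀ x, ¬ IsReticulation adj x) (hy : adj y x) (hz : adj z x) : y = z := by
  have hx := (h.adj_mem hy).2
  have hle : indeg adj x ≤ 1 := by
    by_cases hr : x = root
    · rw [hr, h.root_indeg]; omega
    by_cases h0 : outdeg adj x = 0
    · exact (h.leaf_indeg x hx h0).le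
    rcases h.internal_deg x hx hr h0 with ht | hr'
    · exact ht.1.le
    · exact absurd hr' (htree x)
  exact (Set.ncard_le_one (h.finite_verts.subset fun y hy => (h.adj_mem hy).1)).1 hle y hy z hz

end IsBinaryNetwork

section

variable {V : Type*}

def IsPrivateVertex (vertsT : Set V) (adjT : V → V → Prop) (φ : V → V)
    (P : V → V → List V) (a b x : V) : Prop :=
  x ∉ φ '' vertsT ∧ ∀ a' b', adjT a' b' → x ∈ P a' b' → a' = a ∧ b' = b

/-- The witnesses of `Displays`, with its last two conditions replaced by the equivalent
(for acyclic `adjM`) requirement that every vertex of `P a b` other than its ends be private. -/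
structure IsDisplayEmbedding (vertsM : Set V) (adjM : V → V → Prop) (vertsT : Set V)
    (adjT : V → V → Prop) (φ : V → V) (P : V → V → List V) : Prop where
  mapsTo : Set.MapsTo φ vertsT vertsM
  injOn : Set.InjOn φ vertsT
  map_leaf : ∀ ℓ, IsLeaf vertsT adjT ℓ → φ ℓ = ℓ
  isPath : ∀ a b, adjT a b → IsPathFromTo adjM (P a b) (φ a) (φ b)
  isPrivateVertex : ∀ a b, adjT a b → ∀ x ∈ P a b, x ≠ φ a → x ≠ φ b →
    IsPrivateVertex vertsT adjT φ P a b x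

namespace IsDisplayEmbedding

variable {vertsM vertsT : Set V} {adjM adjT : V → V → Prop} {φ : V → V} {P : V → V → List V}
  {a b c x y : V}

theorem of_displays (h : Displays vertsM adjM vertsT adjT) :
    ∃ φ P, IsDisplayEmbedding vertsM adjM vertsT adjT φ P := by
  obtain ⟨φ, P, hmaps, hinj, hleaf, hpath, hint, hdisj⟩ := h
  refine ⟨φ, P, hmaps, hinj, hleaf, hpath, fun a b hab x hx hxa hxb => ⟨?_, ?_⟩⟩
  · obtain ⟨-, ha, hb⟩ := hpath a b hab
    exact hint a b hab x (List.mem_tail_dropLast_of_ne ha hb hx hxa hxb)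
  · intro a' b' hab' hx'
    by_contra hne
    have := (hdisj a b a' b' hab hab' (fun h => hne (by simp_all)) x hx hx').1
    tauto

theorem displays (E : IsDisplayEmbedding vertsM adjM vertsT adjT φ P)
    (hacyc : ∀ x, ¬ TransGen adjM x x) : Displays vertsM adjM vertsT adjT := by
  have hend : ∀ {a b a' b'}, adjT a b → adjT a' b' → (a, b) ≠ (a', b') →
      ∀ x ∈ P a b, x ∈ P a' b' → x = φ a ∨ x = φ b := by
    intro a b a' b' hab hab' hne x hx hx'
    by_contra! h
    obtain ⟨rfl, rfl⟩ := (E.isPrivateVertex a b hab x hx h.1 h.2).2 a' b' hab' hx'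
    exact hne rfl
  refine ⟨φ, P, E.mapsTo, E.injOn, E.map_leaf, E.isPath, fun a b hab x hx => ?_,
    fun a b a' b' hab hab' hne x hx hx' =>
      ⟨hend hab hab' hne x hx hx', hend hab' hab hne.symm x hx' hx⟩⟩
  obtain ⟨hc, ha, hb⟩ := E.isPath a b hab
  obtain ⟨hxa, hxb⟩ := (hc.nodup_of_acyclic hacyc).ne_of_mem_tail_dropLast ha hb hx
  exact (E.isPrivateVertex a b hab x
    (List.mem_of_mem_tail (List.mem_of_mem_dropLast hx)) hxa hxb).1

theorem mono (E : IsDisplayEmbedding vertsM adjM vertsT adjT φ P) {adj' : V → V → Prop}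
    (h : ∀ a b, adjT a b → (P a b).IsChain adj') :
    IsDisplayEmbedding vertsM adj' vertsT adjT φ P :=
  { E with isPath := fun a b hab => ⟨h a b hab, (E.isPath a b hab).2⟩ }

theorem displays_deleteEdge (E : IsDisplayEmbedding vertsM adjM vertsT adjT φ P)
    (hacyc : ∀ x, ¬ TransGen adjM x x) {w u : V} (h : ∀ a b, adjT a b → w ∈ P a b → u ∉ P a b) :
    Displays vertsM (fun x y => adjM x y ∧ ¬ (x = w ∧ y = u)) vertsT adjT :=
  (E.mono fun a b hab => (E.isPath a b hab).1.imp_of_mem_imp fun _ _ hc hd hcd =>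
    ⟨hcd, fun hwu => h a b hab (hwu.1 ▸ hc) (hwu.2 ▸ hd)⟩).displays fun x hx =>
      hacyc x (TransGen.mono (fun _ _ h => h.1) _ _ hx)

theorem map_mem (E : IsDisplayEmbedding vertsM adjM vertsT adjT φ P) (hab : adjT a b) :
    φ a ∈ P a b :=
  List.mem_of_mem_head? (E.isPath a b hab).2.1

theorem map_ne_map (E : IsDisplayEmbedding vertsM adjM vertsT adjT φ P)
    (hTmem : ∀ ⦃a b⦄, adjT a b → a ∈ vertsT ∧ b ∈ vertsT) (hTirr : ∀ a, ¬ adjT a a)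
    (hab : adjT a b) : φ a ≠ φ b := by
  intro h
  obtain rfl := E.injOn (hTmem hab).1 (hTmem hab).2 h
  exact hTirr a hab

theorem exists_adj_of_mem (E : IsDisplayEmbedding vertsM adjM vertsT adjT φ P)
    (hab : adjT a b) (hx : x ∈ P a b) (hxb : x ≠ φ b) : ∃ y ∈ P a b, adjM x y :=
  (E.isPath a b hab).1.exists_rel_of_mem (E.isPath a b hab).2.2 hx hxb

theorem mem_of_outdeg_eq_one (E : IsDisplayEmbedding vertsM adjM vertsT adjT φ P)
    (hab : adjT a b) (hx : x ∈ P a b) (hxb : x ≠ φ b) (h1 : outdeg adjM x = 1)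
    (hxy : adjM x y) : y ∈ P a b := by
  obtain ⟨y', hy', hxy'⟩ := E.exists_adj_of_mem hab hx hxb
  rwa [eq_of_outdeg_eq_one h1 hxy hxy'] at hy'

theorem eq_map_of_mem_of_mem (E : IsDisplayEmbedding vertsM adjM vertsT adjT φ P)
    {a' b' : V} (hab : adjT a b) (hab' : adjT a' b') (hne : ¬ (a' = a ∧ b' = b))
    (hx : x ∈ P a b) (hx' : x ∈ P a' b') (hxb : x ≠ φ b) : x = φ a := by
  by_contra hxa
  exact hne ((E.isPrivateVertex a b hab x hx hxa hxb).2 a' b' hab' hx')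

theorem eq_of_mem_of_isLeaf (E : IsDisplayEmbedding vertsM adjM vertsT adjT φ P)
    (hTmem : ∀ ⦃a b⦄, adjT a b → a ∈ vertsT ∧ b ∈ vertsT) {ℓ : V}
    (hℓ : IsLeaf vertsT adjT ℓ) (hout : ∀ y, ¬ adjM ℓ y) :
    ∀ ⦃a b⦄, adjT a b → ℓ ∈ P a b → b = ℓ := by
  intro a b hab hx
  by_contra hne
  obtain ⟨y, -, hy⟩ := E.exists_adj_of_mem hab hx fun h =>
    hne (E.injOn (hTmem hab).2 hℓ.1 (by rw [← h, E.map_leaf ℓ hℓ]))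
  exact hout y hy

theorem eq_of_mem_of_outdeg_eq_one (E : IsDisplayEmbedding vertsM adjM vertsT adjT φ P)
    (hTmem : ∀ ⦃a b⦄, adjT a b → a ∈ vertsT ∧ b ∈ vertsT) (hx : x ∉ φ '' vertsT)
    (h1 : outdeg adjM x = 1) (hxy : adjM x y) (hy : ∀ ⦃a b⦄, adjT a b → y ∈ P a b → b = c) :
    ∀ ⦃a b⦄, adjT a b → x ∈ P a b → b = c := fun _ b hab hxP =>
  hy hab (E.mem_of_outdeg_eq_one hab hxP (fun h => hx ⟨b, (hTmem hab).2, h.symm⟩) h1 hxy)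

/-- The paths from `φ q` to the images of two children of `q` leave `φ q` along different
edges. -/
theorem map_ne_of_outdeg_eq_one (E : IsDisplayEmbedding vertsM adjM vertsT adjT φ P)
    (hTmem : ∀ ⦃a b⦄, adjT a b → a ∈ vertsT ∧ b ∈ vertsT) (hTirr : ∀ a, ¬ adjT a a)
    (hMirr : ∀ y, ¬ adjM y y) {q c₁ c₂ : V} (h₁ : adjT q c₁) (h₂ : adjT q c₂) (hc : c₁ ≠ c₂)
    (hx : outdeg adjM x = 1) : φ q ≠ x := by
  rintro rfl
  obtain ⟨y, hy⟩ := exists_adj_of_outdeg_eq_one hx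
  have hmem : ∀ c, adjT q c → y ∈ P q c := fun c hc =>
    E.mem_of_outdeg_eq_one hc (E.map_mem hc) (E.map_ne_map hTmem hTirr hc) hx hy
  have hyq : y ≠ φ q := fun h => hMirr _ (h ▸ hy)
  by_cases hy₁ : y = φ c₁
  · refine hc (E.injOn (hTmem h₁).2 (hTmem h₂).2 (hy₁.symm.trans ?_))
    by_contra hy₂
    exact hc ((E.isPrivateVertex q c₂ h₂ y (hmem c₂ h₂) hyq hy₂).2 q c₁ h₁ (hmem c₁ h₁)).2
  · exact hc.symm ((E.isPrivateVertex q c₁ h₁ y (hmem c₁ h₁) hyq hy₁).2 q c₂ h₂ (hmem c₂ h₂)).2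

theorem notMem_image_of_outdeg_eq_one (E : IsDisplayEmbedding vertsM adjM vertsT adjT φ P)
    {rootT : V} (hT : IsBinaryNetwork vertsT adjT rootT) (hTtree : ∀ x, ¬ IsReticulation adjT x)
    (hMirr : ∀ y, ¬ adjM y y) (hleaf : ∀ q, IsLeaf vertsT adjT q → outdeg adjM q = 0)
    (hx : outdeg adjM x = 1) : x ∉ φ '' vertsT := by
  rintro ⟨q, hq, rfl⟩
  by_cases hql : IsLeaf vertsT adjT q
  · have := hleaf q hql
    rw [E.map_leaf q hql] at hx
    omega
  obtain ⟨c₁, c₂, hc, h₁, h₂⟩ := exists_adj_of_outdeg_eq_two (hT.outdeg_eq_two hTtree hq hql)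
  exact E.map_ne_of_outdeg_eq_one hT.adj_mem hT.irrefl hMirr h₁ h₂ hc hx rfl

end IsDisplayEmbedding

theorem notMem_image_update [DecidableEq V] {vertsT : Set V} {φ : V → V} {p z x : V}
    (hx : x ∉ φ '' vertsT) (hxz : x ≠ z) : x ∉ Function.update φ p z '' vertsT := by
  rintro ⟨q, hq, rfl⟩
  by_cases hqp : q = p
  · subst hqp
    exact hxz (Function.update_self ..)
  · exact hx ⟨q, hq, (Function.update_of_ne hqp ..).symm⟩

/-- The paths after the image of `p` is moved from the head of `P p c₂ = R ++ S` down to the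
last vertex `z` of `R`: the path to `c₁` becomes `Q`, the path to `c₂` shrinks to `z :: S` and
the path into `p` grows by `R.tail`. -/
def slidePaths [DecidableEq V] (P : V → V → List V) (p c₁ c₂ z : V) (Q R S : List V) (a b : V) :
    List V :=
  if a = p ∧ b = c₁ then Q
  else if a = p ∧ b = c₂ then z :: S
  else if b = p then P a p ++ R.tail
  else P a b

/-- Hypotheses under which `Function.update φ p z` and `slidePaths` embed `T` into `adj'`. Only
the discarded path `P p c₁` may use edges outside `adj'`. -/
structure SlideData (vertsM : Set V) (adjM adj' : V → V → Prop) (vertsT : Set V)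
    (adjT : V → V → Prop) (φ : V → V) (P : V → V → List V) (p c₁ c₂ z : V)
    (Q R S : List V) : Prop where
  emb : IsDisplayEmbedding vertsM adjM vertsT adjT φ P
  mem_verts : ∀ ⦃a b⦄, adjT a b → a ∈ vertsT ∧ b ∈ vertsT
  irrefl : ∀ a, ¬ adjT a a
  acyclic : ∀ x, ¬ TransGen adj' x x
  adj_c₁ : adjT p c₁
  adj_c₂ : adjT p c₂
  c₁_ne_c₂ : c₁ ≠ c₂
  eq_or_eq_of_adj : ∀ c, adjT p c → c = c₁ ∨ c = c₂
  eq_of_adj_of_adj : ∀ a a', adjT a p → adjT a' p → a = a'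
  isChain : ∀ a b, adjT a b → ¬ (a = p ∧ b = c₁) → (P a b).IsChain adj'
  eq_append : P p c₂ = R ++ S
  getLast?_eq : R.getLast? = some z
  ne_nil : S ≠ []
  mem_vertsM : z ∈ vertsM
  isPath : IsPathFromTo adj' Q z (φ c₁)
  isPrivateVertex : ∀ x ∈ Q, x ≠ z → x ≠ φ c₁ → IsPrivateVertex vertsT adjT φ P p c₁ x

namespace SlideData

variable {vertsM vertsT : Set V} {adjM adj' adjT : V → V → Prop} {φ : V → V}
  {P : V → V → List V} {p c₁ c₂ z : V} {Q R S : List V} {a b x : V}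

theorem c₁_ne (h : SlideData vertsM adjM adj' vertsT adjT φ P p c₁ c₂ z Q R S) : c₁ ≠ p :=
  fun e => h.irrefl p (e ▸ h.adj_c₁)

theorem c₂_ne (h : SlideData vertsM adjM adj' vertsT adjT φ P p c₁ c₂ z Q R S) : c₂ ≠ p :=
  fun e => h.irrefl p (e ▸ h.adj_c₂)

theorem isChain_append (h : SlideData vertsM adjM adj' vertsT adjT φ P p c₁ c₂ z Q R S) :
    (R ++ S).IsChain adj' :=
  h.eq_append ▸ h.isChain p c₂ h.adj_c₂ fun hc => h.c₁_ne_c₂ hc.2.symm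

theorem nodup (h : SlideData vertsM adjM adj' vertsT adjT φ P p c₁ c₂ z Q R S) :
    (R ++ S).Nodup :=
  h.isChain_append.nodup_of_acyclic h.acyclic

theorem z_mem (h : SlideData vertsM adjM adj' vertsT adjT φ P p c₁ c₂ z Q R S) : z ∈ R :=
  List.mem_of_mem_getLast? h.getLast?_eq

theorem eq_cons (h : SlideData vertsM adjM adj' vertsT adjT φ P p c₁ c₂ z Q R S) :
    R = φ p :: R.tail := by
  have hhead := (h.emb.isPath p c₂ h.adj_c₂).2.1
  rw [h.eq_append, List.head?_append_of_ne_nil _ (List.ne_nil_of_mem h.z_mem)] at hhead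
  exact (List.cons_head?_tail hhead).symm

theorem map_mem (h : SlideData vertsM adjM adj' vertsT adjT φ P p c₁ c₂ z Q R S) :
    φ p ∈ R := by
  rw [h.eq_cons]
  exact List.mem_cons_self

theorem map_mem_S (h : SlideData vertsM adjM adj' vertsT adjT φ P p c₁ c₂ z Q R S) :
    φ c₂ ∈ S := by
  have hlast := (h.emb.isPath p c₂ h.adj_c₂).2.2
  rw [h.eq_append, List.getLast?_append_of_ne_nil _ h.ne_nil] at hlast
  exact List.mem_of_mem_getLast? hlast

theorem mem_of_mem_R (h : SlideData vertsM adjM adj' vertsT adjT φ P p c₁ c₂ z Q R S)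
    (hx : x ∈ R) : x ∈ P p c₂ :=
  h.eq_append ▸ List.mem_append_left _ hx

theorem mem_of_mem_S (h : SlideData vertsM adjM adj' vertsT adjT φ P p c₁ c₂ z Q R S)
    (hx : x ∈ S) : x ∈ P p c₂ :=
  h.eq_append ▸ List.mem_append_right _ hx

theorem notMem_S (h : SlideData vertsM adjM adj' vertsT adjT φ P p c₁ c₂ z Q R S)
    (hx : x ∈ R) : x ∉ S :=
  List.disjoint_of_nodup_append h.nodup hx

theorem isPrivateVertex_c₂_of_mem_tail
    (h : SlideData vertsM adjM adj' vertsT adjT φ P p c₁ c₂ z Q R S) (hx : x ∈ R.tail) :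
    IsPrivateVertex vertsT adjT φ P p c₂ x := by
  have hxR := List.mem_of_mem_tail hx
  have hnd := h.nodup.of_append_left
  rw [h.eq_cons] at hnd
  exact h.emb.isPrivateVertex p c₂ h.adj_c₂ x (h.mem_of_mem_R hxR)
    (fun hxp => (List.nodup_cons.1 hnd).1 (hxp ▸ hx))
    (fun hxc => h.notMem_S hxR (hxc ▸ h.map_mem_S))

theorem isPrivateVertex_c₂_of_mem_S
    (h : SlideData vertsM adjM adj' vertsT adjT φ P p c₁ c₂ z Q R S) (hx : x ∈ S)
    (hxc : x ≠ φ c₂) : IsPrivateVertex vertsT adjT φ P p c₂ x :=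
  h.emb.isPrivateVertex p c₂ h.adj_c₂ x (h.mem_of_mem_S hx)
    (fun hxp => h.notMem_S h.map_mem (hxp ▸ hx)) hxc

theorem eq_of_mem_Q (h : SlideData vertsM adjM adj' vertsT adjT φ P p c₁ c₂ z Q R S)
    (hxQ : x ∈ Q) (hxz : x ≠ z) (himg : x ∉ φ '' vertsT) (hab : adjT a b) (hx : x ∈ P a b) :
    a = p ∧ b = c₁ :=
  (h.isPrivateVertex x hxQ hxz fun e => himg ⟨c₁, (h.mem_verts h.adj_c₁).2, e.symm⟩).2 a b hab hx

theorem map_ne (h : SlideData vertsM adjM adj' vertsT adjT φ P p c₁ c₂ z Q R S) {q : V}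
    (hq : q ∈ vertsT) (hqp : q ≠ p) : φ q ≠ z := by
  intro hqz
  have hzR := h.z_mem
  rw [h.eq_cons] at hzR
  rcases List.mem_cons.1 hzR with hz | hz
  · exact hqp (h.emb.injOn hq (h.mem_verts h.adj_c₁).1 (hqz.trans hz))
  · exact (h.isPrivateVertex_c₂_of_mem_tail hz).1 ⟨q, hq, hqz⟩

theorem not_isLeaf (h : SlideData vertsM adjM adj' vertsT adjT φ P p c₁ c₂ z Q R S) :
    ¬ IsLeaf vertsT adjT p := by
  intro hp
  have hs : {c | adjT p c} = {c₁, c₂} := Set.ext fun c =>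
    ⟨h.eq_or_eq_of_adj c, by rintro (rfl | rfl); exacts [h.adj_c₁, h.adj_c₂]⟩
  have h0 := hp.2
  rw [outdeg, hs, Set.ncard_pair h.c₁_ne_c₂] at h0
  omega

theorem ne_of_adj (h : SlideData vertsM adjM adj' vertsT adjT φ P p c₁ c₂ z Q R S)
    (hab : adjT a b) (h₁ : ¬ (a = p ∧ b = c₁)) (h₂ : ¬ (a = p ∧ b = c₂)) : a ≠ p := by
  intro ha
  rcases h.eq_or_eq_of_adj b (ha ▸ hab) with hb | hb
  exacts [h₁ ⟨ha, hb⟩, h₂ ⟨ha, hb⟩]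

theorem isPath_S (h : SlideData vertsM adjM adj' vertsT adjT φ P p c₁ c₂ z Q R S) :
    IsPathFromTo adj' (z :: S) z (φ c₂) := by
  have hc := h.isChain_append
  rw [← List.dropLast_append_getLast? z h.getLast?_eq, List.append_assoc] at hc
  have hlast := (h.emb.isPath p c₂ h.adj_c₂).2.2
  rw [h.eq_append, List.getLast?_append_of_ne_nil _ h.ne_nil] at hlast
  exact ⟨hc.right_of_append, rfl, (List.getLast?_append_of_ne_nil [z] h.ne_nil).trans hlast⟩

theorem isPath_parent (h : SlideData vertsM adjM adj' vertsT adjT φ P p c₁ c₂ z Q R S)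
    (hap : adjT a p) : IsPathFromTo adj' (P a p ++ R.tail) (φ a) z := by
  obtain ⟨-, ha, hb⟩ := h.emb.isPath a p hap
  have hR := h.isChain_append.left_of_append
  rw [h.eq_cons] at hR
  refine ⟨(h.isChain a p hap fun e => h.irrefl p (e.1 ▸ hap)).append hR.tail
    fun x hx y hy => ?_, ?_, ?_⟩
  · obtain rfl : x = φ p := Option.some.inj (hx.symm.trans hb)
    exact hR.rel_head? hy
  · rw [List.head?_append_of_ne_nil _ (List.ne_nil_of_mem (h.emb.map_mem hap)), ha]
  · have hz := h.getLast?_eq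
    rw [h.eq_cons] at hz
    rcases ht : R.tail with _ | ⟨y, t⟩
    · rw [ht] at hz
      simp only [List.getLast?_singleton, Option.some.injEq] at hz
      rwa [List.append_nil, ← hz]
    · rw [ht, List.getLast?_cons_cons] at hz
      rw [List.getLast?_append_of_ne_nil _ (List.cons_ne_nil y t), hz]

variable [DecidableEq V]

theorem mem_slidePaths (h : SlideData vertsM adjM adj' vertsT adjT φ P p c₁ c₂ z Q R S)
    (hab : adjT a b) (hx : x ∈ slidePaths P p c₁ c₂ z Q R S a b) :
    (a = p ∧ b = c₁ ∧ x ∈ Q) ∨ (a = p ∧ b = c₂ ∧ (x = z ∨ x ∈ S)) ∨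
      (b = p ∧ (x ∈ P a p ∨ x ∈ R.tail)) ∨ (a ≠ p ∧ b ≠ p ∧ x ∈ P a b) := by
  unfold slidePaths at hx
  split_ifs at hx with h₁ h₂ h₃
  · exact Or.inl ⟨h₁.1, h₁.2, hx⟩
  · exact Or.inr (Or.inl ⟨h₂.1, h₂.2, List.mem_cons.1 hx⟩)
  · exact Or.inr (Or.inr (Or.inl ⟨h₃, List.mem_append.1 hx⟩))
  · exact Or.inr (Or.inr (Or.inr ⟨h.ne_of_adj hab h₁ h₂, h₃, hx⟩))

theorem slide_isPrivateVertex_Q (h : SlideData vertsM adjM adj' vertsT adjT φ P p c₁ c₂ z Q R S)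
    (hx : x ∈ Q) (hxz : x ≠ z) (hxc : x ≠ φ c₁) :
    IsPrivateVertex vertsT adjT (Function.update φ p z) (slidePaths P p c₁ c₂ z Q R S) p c₁ x := by
  obtain ⟨himg, honly⟩ := h.isPrivateVertex x hx hxz hxc
  refine ⟨notMem_image_update himg hxz, fun a' b' hab' hx' => ?_⟩
  rcases h.mem_slidePaths hab' hx' with
    ⟨ha', hb', -⟩ | ⟨-, -, hxz' | hxS⟩ | ⟨hb', hxP | hxR⟩ | ⟨-, -, hxP⟩
  · exact ⟨ha', hb'⟩
  · exact absurd hxz' hxz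
  · exact absurd (honly p c₂ h.adj_c₂ (h.mem_of_mem_S hxS)).2 h.c₁_ne_c₂.symm
  · subst b'
    exact absurd ((honly a' p hab' hxP).1 ▸ hab') (h.irrefl p)
  · exact absurd (honly p c₂ h.adj_c₂ (h.mem_of_mem_R (List.mem_of_mem_tail hxR))).2
      h.c₁_ne_c₂.symm
  · exact honly a' b' hab' hxP

theorem slide_isPrivateVertex_S (h : SlideData vertsM adjM adj' vertsT adjT φ P p c₁ c₂ z Q R S)
    (hx : x ∈ S) (hxc : x ≠ φ c₂) :
    IsPrivateVertex vertsT adjT (Function.update φ p z) (slidePaths P p c₁ c₂ z Q R S) p c₂ x := by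
  have hxz : x ≠ z := fun e => h.notMem_S h.z_mem (e ▸ hx)
  obtain ⟨himg, honly⟩ := h.isPrivateVertex_c₂_of_mem_S hx hxc
  refine ⟨notMem_image_update himg hxz, fun a' b' hab' hx' => ?_⟩
  rcases h.mem_slidePaths hab' hx' with
    ⟨-, -, hxQ⟩ | ⟨ha', hb', -⟩ | ⟨hb', hxP | hxR⟩ | ⟨-, -, hxP⟩
  · exact absurd (h.eq_of_mem_Q hxQ hxz himg h.adj_c₂ (h.mem_of_mem_S hx)).2 h.c₁_ne_c₂.symm
  · exact ⟨ha', hb'⟩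
  · subst b'
    exact absurd ((honly a' p hab' hxP).1 ▸ hab') (h.irrefl p)
  · exact absurd hx (h.notMem_S (List.mem_of_mem_tail hxR))
  · exact honly a' b' hab' hxP

theorem slide_isPrivateVertex_of_mem_tail
    (h : SlideData vertsM adjM adj' vertsT adjT φ P p c₁ c₂ z Q R S) (hap : adjT a p)
    (hx : x ∈ R.tail) (hxz : x ≠ z) :
    IsPrivateVertex vertsT adjT (Function.update φ p z) (slidePaths P p c₁ c₂ z Q R S) a p x := by
  obtain ⟨himg, honly⟩ := h.isPrivateVertex_c₂_of_mem_tail hx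
  have hxR := List.mem_of_mem_tail hx
  refine ⟨notMem_image_update himg hxz, fun a' b' hab' hx' => ?_⟩
  rcases h.mem_slidePaths hab' hx' with
    ⟨-, -, hxQ⟩ | ⟨-, -, hxz' | hxS⟩ | ⟨hb', -⟩ | ⟨ha', -, hxP⟩
  · exact absurd (h.eq_of_mem_Q hxQ hxz himg h.adj_c₂ (h.mem_of_mem_R hxR)).2 h.c₁_ne_c₂.symm
  · exact absurd hxz' hxz
  · exact absurd hxS (h.notMem_S hxR)
  · subst b'
    exact ⟨h.eq_of_adj_of_adj a' a hab' hap, rfl⟩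
  · exact absurd (honly a' b' hab' hxP).1 ha'

theorem slide_isPrivateVertex_of_mem
    (h : SlideData vertsM adjM adj' vertsT adjT φ P p c₁ c₂ z Q R S) (hap : adjT a p)
    (hx : x ∈ P a p) (hxa : x ≠ φ a) (hxp : x ≠ φ p) (hxz : x ≠ z) :
    IsPrivateVertex vertsT adjT (Function.update φ p z) (slidePaths P p c₁ c₂ z Q R S) a p x := by
  obtain ⟨himg, honly⟩ := h.emb.isPrivateVertex a p hap x hx hxa hxp
  refine ⟨notMem_image_update himg hxz, fun a' b' hab' hx' => ?_⟩
  rcases h.mem_slidePaths hab' hx' with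
    ⟨-, -, hxQ⟩ | ⟨-, -, hxz' | hxS⟩ | ⟨hb', -⟩ | ⟨-, hb', hxP⟩
  · exact absurd ((h.eq_of_mem_Q hxQ hxz himg hap hx).1 ▸ hap) (h.irrefl p)
  · exact absurd hxz' hxz
  · exact absurd ((honly p c₂ h.adj_c₂ (h.mem_of_mem_S hxS)).1.symm ▸ hap) (h.irrefl p)
  · subst b'
    exact ⟨h.eq_of_adj_of_adj a' a hab' hap, rfl⟩
  · exact absurd (honly a' b' hab' hxP).2 hb'

theorem slide_isPrivateVertex_map
    (h : SlideData vertsM adjM adj' vertsT adjT φ P p c₁ c₂ z Q R S) (hap : adjT a p)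
    (hpz : φ p ≠ z) :
    IsPrivateVertex vertsT adjT (Function.update φ p z) (slidePaths P p c₁ c₂ z Q R S) a p
      (φ p) := by
  have hpT := (h.mem_verts h.adj_c₁).1
  refine ⟨?_, fun a' b' hab' hx' => ?_⟩
  · rintro ⟨q, hq, hqp⟩
    by_cases hq' : q = p
    · rw [hq', Function.update_self] at hqp
      exact hpz hqp.symm
    · rw [Function.update_of_ne hq'] at hqp
      exact hq' (h.emb.injOn hq hpT hqp)
  rcases h.mem_slidePaths hab' hx' with
    ⟨-, -, hxQ⟩ | ⟨-, -, hxz' | hxS⟩ | ⟨hb', -⟩ | ⟨ha', hb', hxP⟩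
  · exact absurd ⟨p, hpT, rfl⟩
      (h.isPrivateVertex _ hxQ hpz (h.emb.map_ne_map h.mem_verts h.irrefl h.adj_c₁)).1
  · exact absurd hxz' hpz
  · exact absurd hxS (h.notMem_S h.map_mem)
  · subst b'
    exact ⟨h.eq_of_adj_of_adj a' a hab' hap, rfl⟩
  · have hpb : φ p ≠ φ b' := fun e => hb' (h.emb.injOn (h.mem_verts hab').2 hpT e.symm)
    have hpa := h.emb.eq_map_of_mem_of_mem hab' h.adj_c₁ (fun e => ha' e.1.symm) hxP
      (h.emb.map_mem h.adj_c₁) hpb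
    exact absurd (h.emb.injOn (h.mem_verts hab').1 hpT hpa.symm) ha'

theorem slide_isPrivateVertex_parent
    (h : SlideData vertsM adjM adj' vertsT adjT φ P p c₁ c₂ z Q R S) (hap : adjT a p)
    (hx : x ∈ P a p ++ R.tail) (hxa : x ≠ φ a) (hxz : x ≠ z) :
    IsPrivateVertex vertsT adjT (Function.update φ p z) (slidePaths P p c₁ c₂ z Q R S) a p x := by
  rcases List.mem_append.1 hx with hx | hx
  · by_cases hxp : x = φ p
    · exact hxp ▸ h.slide_isPrivateVertex_map hap (hxp ▸ hxz)
    · exact h.slide_isPrivateVertex_of_mem hap hx hxa hxp hxz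
  · exact h.slide_isPrivateVertex_of_mem_tail hap hx hxz

theorem slide_isPrivateVertex_other
    (h : SlideData vertsM adjM adj' vertsT adjT φ P p c₁ c₂ z Q R S) (hab : adjT a b)
    (ha : a ≠ p) (hb : b ≠ p) (hx : x ∈ P a b) (hxa : x ≠ φ a) (hxb : x ≠ φ b) :
    IsPrivateVertex vertsT adjT (Function.update φ p z) (slidePaths P p c₁ c₂ z Q R S) a b x := by
  obtain ⟨himg, honly⟩ := h.emb.isPrivateVertex a b hab x hx hxa hxb
  have hxz : x ≠ z := fun e =>
    ha (honly p c₂ h.adj_c₂ (h.mem_of_mem_R (e ▸ h.z_mem))).1.symm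
  refine ⟨notMem_image_update himg hxz, fun a' b' hab' hx' => ?_⟩
  rcases h.mem_slidePaths hab' hx' with
    ⟨-, -, hxQ⟩ | ⟨-, -, hxz' | hxS⟩ | ⟨hb', hxP | hxR⟩ | ⟨-, -, hxP⟩
  · exact absurd (h.eq_of_mem_Q hxQ hxz himg hab hx).1 ha
  · exact absurd hxz' hxz
  · exact absurd (honly p c₂ h.adj_c₂ (h.mem_of_mem_S hxS)).1.symm ha
  · subst b'
    exact absurd (honly a' p hab' hxP).2.symm hb
  · exact absurd (honly p c₂ h.adj_c₂ (h.mem_of_mem_R (List.mem_of_mem_tail hxR))).1.symm ha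
  · exact honly a' b' hab' hxP
theorem slide_isPath (h : SlideData vertsM adjM adj' vertsT adjT φ P p c₁ c₂ z Q R S)
    (hab : adjT a b) :
    IsPathFromTo adj' (slidePaths P p c₁ c₂ z Q R S a b) (Function.update φ p z a)
      (Function.update φ p z b) := by
  unfold slidePaths
  split_ifs with h₁ h₂ h₃
  · rw [h₁.1, h₁.2, Function.update_self, Function.update_of_ne h.c₁_ne]
    exact h.isPath
  · rw [h₂.1, h₂.2, Function.update_self, Function.update_of_ne h.c₂_ne]
    exact h.isPath_S
  · subst b
    rw [Function.update_self, Function.update_of_ne fun e : a = p => h.irrefl p (e ▸ hab)]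
    exact h.isPath_parent hab
  · obtain ⟨-, hh, hl⟩ := h.emb.isPath a b hab
    rw [Function.update_of_ne (h.ne_of_adj hab h₁ h₂), Function.update_of_ne h₃]
    exact ⟨h.isChain a b hab h₁, hh, hl⟩

theorem slide_isPrivateVertex (h : SlideData vertsM adjM adj' vertsT adjT φ P p c₁ c₂ z Q R S)
    (hab : adjT a b) (hx : x ∈ slidePaths P p c₁ c₂ z Q R S a b)
    (hxa : x ≠ Function.update φ p z a) (hxb : x ≠ Function.update φ p z b) :
    IsPrivateVertex vertsT adjT (Function.update φ p z) (slidePaths P p c₁ c₂ z Q R S) a b x := by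
  unfold slidePaths at hx
  split_ifs at hx with h₁ h₂ h₃
  · obtain ⟨ha, hb⟩ := h₁
    subst a b
    rw [Function.update_self] at hxa
    rw [Function.update_of_ne h.c₁_ne] at hxb
    exact h.slide_isPrivateVertex_Q hx hxa hxb
  · obtain ⟨ha, hb⟩ := h₂
    subst a b
    rw [Function.update_self] at hxa
    rw [Function.update_of_ne h.c₂_ne] at hxb
    exact h.slide_isPrivateVertex_S ((List.mem_cons.1 hx).resolve_left hxa) hxb
  · subst b
    rw [Function.update_of_ne fun e : a = p => h.irrefl p (e ▸ hab)] at hxa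
    rw [Function.update_self] at hxb
    exact h.slide_isPrivateVertex_parent hab hx hxa hxb
  · have ha := h.ne_of_adj hab h₁ h₂
    rw [Function.update_of_ne ha] at hxa
    rw [Function.update_of_ne h₃] at hxb
    exact h.slide_isPrivateVertex_other hab ha h₃ hx hxa hxb

theorem isDisplayEmbedding (h : SlideData vertsM adjM adj' vertsT adjT φ P p c₁ c₂ z Q R S) :
    IsDisplayEmbedding vertsM adj' vertsT adjT (Function.update φ p z)
      (slidePaths P p c₁ c₂ z Q R S) where
  mapsTo q hq := by
    by_cases hqp : q = p
    · rw [hqp, Function.update_self]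
      exact h.mem_vertsM
    · rw [Function.update_of_ne hqp]
      exact h.emb.mapsTo hq
  injOn q₁ hq₁ q₂ hq₂ he := by
    by_cases h₁ : q₁ = p <;> by_cases h₂ : q₂ = p
    · rw [h₁, h₂]
    · rw [h₁, Function.update_self, Function.update_of_ne h₂] at he
      exact absurd he.symm (h.map_ne hq₂ h₂)
    · rw [h₂, Function.update_self, Function.update_of_ne h₁] at he
      exact absurd he (h.map_ne hq₁ h₁)
    · rw [Function.update_of_ne h₁, Function.update_of_ne h₂] at he
      exact h.emb.injOn hq₁ hq₂ he
  map_leaf ℓ hℓ := by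
    rw [Function.update_of_ne fun e : ℓ = p => h.not_isLeaf (e ▸ hℓ)]
    exact h.emb.map_leaf ℓ hℓ
  isPath _ _ hab := h.slide_isPath hab
  isPrivateVertex _ _ hab _ hx hxa hxb := h.slide_isPrivateVertex hab hx hxa hxb

theorem displays (h : SlideData vertsM adjM adj' vertsT adjT φ P p c₁ c₂ z Q R S) :
    Displays vertsM adj' vertsT adjT :=
  h.isDisplayEmbedding.displays h.acyclic

end SlideData

structure CaseA (vertsN : Set V) (adjN : V → V → Prop) (rootN : V) (vertsT : Set V)
    (adjT : V → V → Prop) (rootT : V) (φ : V → V) (P : V → V → List V) (w u v ℓ ℓ' : V) :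
    Prop where
  emb : IsDisplayEmbedding vertsN adjN vertsT adjT φ P
  network : IsBinaryNetwork vertsN adjN rootN
  tree : IsBinaryNetwork vertsT adjT rootT
  not_isReticulation : ∀ x, ¬ IsReticulation adjT x
  leaves : {x | IsLeaf vertsT adjT x} = {x | IsLeaf vertsN adjN x}
  adj_w_u : adjN w u
  adj_w_ℓ' : adjN w ℓ'
  adj_u_v : adjN u v
  adj_v_ℓ : adjN v ℓ
  outdeg_u : outdeg adjN u = 1
  outdeg_v : outdeg adjN v = 1
  isLeaf_ℓ : IsLeaf vertsN adjN ℓ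
  isLeaf_ℓ' : IsLeaf vertsN adjN ℓ'

namespace CaseA

variable {vertsN vertsT : Set V} {adjN adjT : V → V → Prop} {rootN rootT : V} {φ : V → V}
  {P : V → V → List V} {w u v ℓ ℓ' p q x y : V}

theorem isLeaf_of_isLeaf (h : CaseA vertsN adjN rootN vertsT adjT rootT φ P w u v ℓ ℓ')
    (hq : IsLeaf vertsN adjN q) : IsLeaf vertsT adjT q :=
  (Set.ext_iff.1 h.leaves q).2 hq

theorem notMem_image (h : CaseA vertsN adjN rootN vertsT adjT rootT φ P w u v ℓ ℓ')
    (hx : outdeg adjN x = 1) : x ∉ φ '' vertsT :=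
  h.emb.notMem_image_of_outdeg_eq_one h.tree h.not_isReticulation h.network.irrefl
    (fun q hq => ((Set.ext_iff.1 h.leaves q).1 hq).2) hx

theorem eq_of_mem_v (h : CaseA vertsN adjN rootN vertsT adjT rootT φ P w u v ℓ ℓ') :
    ∀ ⦃a b⦄, adjT a b → v ∈ P a b → b = ℓ :=
  h.emb.eq_of_mem_of_outdeg_eq_one h.tree.adj_mem (h.notMem_image h.outdeg_v) h.outdeg_v
    h.adj_v_ℓ (h.emb.eq_of_mem_of_isLeaf h.tree.adj_mem (h.isLeaf_of_isLeaf h.isLeaf_ℓ)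
      (h.network.not_adj_of_isLeaf h.isLeaf_ℓ))

theorem eq_of_mem_u (h : CaseA vertsN adjN rootN vertsT adjT rootT φ P w u v ℓ ℓ') :
    ∀ ⦃a b⦄, adjT a b → u ∈ P a b → b = ℓ :=
  h.emb.eq_of_mem_of_outdeg_eq_one h.tree.adj_mem (h.notMem_image h.outdeg_u) h.outdeg_u
    h.adj_u_v h.eq_of_mem_v

theorem exists_eq_append (h : CaseA vertsN adjN rootN vertsT adjT rootT φ P w u v ℓ ℓ')
    {a : V} (ha : adjT a ℓ') : ∃ R, P a ℓ' = R ++ [ℓ'] ∧ R.getLast? = some w := by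
  have hpath := h.emb.isPath a ℓ' ha
  have hne := h.emb.map_ne_map h.tree.adj_mem h.tree.irrefl ha
  rw [h.emb.map_leaf ℓ' (h.isLeaf_of_isLeaf h.isLeaf_ℓ')] at hpath hne
  exact hpath.exists_eq_append hne fun y hy =>
    eq_of_indeg_eq_one (h.network.leaf_indeg ℓ' h.isLeaf_ℓ'.1 h.isLeaf_ℓ'.2) h.adj_w_ℓ' hy

theorem ℓ_ne_ℓ' (h : CaseA vertsN adjN rootN vertsT adjT rootT φ P w u v ℓ ℓ') : ℓ ≠ ℓ' :=
  fun e => h.network.acyclic u <| .tail (.single h.adj_u_v)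
    (eq_of_indeg_eq_one (h.network.leaf_indeg ℓ' h.isLeaf_ℓ'.1 h.isLeaf_ℓ'.2) h.adj_w_ℓ'
      (e ▸ h.adj_v_ℓ) ▸ h.adj_w_u)

theorem ne_of_isLeaf (h : CaseA vertsN adjN rootN vertsT adjT rootT φ P w u v ℓ ℓ')
    (hq : IsLeaf vertsN adjN q) : w ≠ q :=
  fun e => h.network.not_adj_of_isLeaf hq u (e ▸ h.adj_w_u)

theorem displays_of_not_siblings
    (h : CaseA vertsN adjN rootN vertsT adjT rootT φ P w u v ℓ ℓ')
    (hnsib : ¬ ∃ p, adjT p ℓ ∧ adjT p ℓ') :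
    Displays vertsN (fun x y => adjN x y ∧ ¬ (x = w ∧ y = u)) vertsT adjT := by
  refine h.emb.displays_deleteEdge h.network.acyclic fun a b hab hwP huP => hnsib ?_
  have hb := h.eq_of_mem_u hab huP
  subst b
  have hℓT := h.isLeaf_of_isLeaf h.isLeaf_ℓ
  have hℓ'T := h.isLeaf_of_isLeaf h.isLeaf_ℓ'
  obtain ⟨a', ha'⟩ := exists_adj_of_indeg_eq_one (h.tree.leaf_indeg ℓ' hℓ'T.1 hℓ'T.2)
  obtain ⟨R, hR, hRw⟩ := h.exists_eq_append ha'
  have hwP' : w ∈ P a' ℓ' := hR ▸ List.mem_append_left _ (List.mem_of_mem_getLast? hRw)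
  -- `w` ends neither path, so it is the image of the tail of both
  have hwa := h.emb.eq_map_of_mem_of_mem hab ha' (fun e => h.ℓ_ne_ℓ' e.2.symm) hwP hwP'
    (by rw [h.emb.map_leaf ℓ hℓT]; exact h.ne_of_isLeaf h.isLeaf_ℓ)
  have hwa' := h.emb.eq_map_of_mem_of_mem ha' hab (fun e => h.ℓ_ne_ℓ' e.2) hwP' hwP
    (by rw [h.emb.map_leaf ℓ' hℓ'T]; exact h.ne_of_isLeaf h.isLeaf_ℓ')
  exact ⟨a, hab,
    h.emb.injOn (h.tree.adj_mem ha').1 (h.tree.adj_mem hab).1 (hwa'.symm.trans hwa) ▸ ha'⟩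

theorem eq_of_mem_of_siblings (h : CaseA vertsN adjN rootN vertsT adjT rootT φ P w u v ℓ ℓ')
    (hpℓ : adjT p ℓ) {a b : V} (hab : adjT a b) (hx : u ∈ P a b ∨ v ∈ P a b) :
    a = p ∧ b = ℓ := by
  have hb := hx.elim (h.eq_of_mem_u hab) (h.eq_of_mem_v hab)
  subst b
  exact ⟨h.tree.eq_of_adj_of_adj h.not_isReticulation hab hpℓ, rfl⟩

theorem isPath_detour (h : CaseA vertsN adjN rootN vertsT adjT rootT φ P w u v ℓ ℓ')
    (hxw : x ≠ w) (hyu : y ≠ u) :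
    IsPathFromTo (fun p q => adjN p q ∧ ¬ (p = x ∧ q = u) ∧ ¬ (p = y ∧ q = v)) [w, u, v, ℓ] w
      (φ ℓ) := by
  rw [h.emb.map_leaf ℓ (h.isLeaf_of_isLeaf h.isLeaf_ℓ)]
  have huv := h.network.ne_of_adj h.adj_u_v
  have hvℓ := h.network.ne_of_adj h.adj_v_ℓ
  have hℓu : ℓ ≠ u := fun e => h.network.not_adj_of_isLeaf h.isLeaf_ℓ v (e ▸ h.adj_u_v)
  refine ⟨.cons_cons ⟨h.adj_w_u, fun e => hxw e.1.symm, fun e => huv e.2⟩ <|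
    .cons_cons ⟨h.adj_u_v, fun e => huv e.2.symm, fun e => hyu e.1.symm⟩ <|
    .cons_cons ⟨h.adj_v_ℓ, fun e => hℓu e.2, fun e => hvℓ e.2.symm⟩ <| .singleton ℓ, rfl, rfl⟩

theorem slideData (h : CaseA vertsN adjN rootN vertsT adjT rootT φ P w u v ℓ ℓ')
    (hpℓ : adjT p ℓ) (hpℓ' : adjT p ℓ') (hxw : x ≠ w) (hyu : y ≠ u) {R : List V}
    (hR : P p ℓ' = R ++ [ℓ']) (hRw : R.getLast? = some w) :
    SlideData vertsN adjN (fun p q => adjN p q ∧ ¬ (p = x ∧ q = u) ∧ ¬ (p = y ∧ q = v)) vertsT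
      adjT φ P p ℓ ℓ' w [w, u, v, ℓ] R [ℓ'] where
  emb := h.emb
  mem_verts := h.tree.adj_mem
  irrefl := h.tree.irrefl
  acyclic _ hx := h.network.acyclic _ (TransGen.mono (fun _ _ h => h.1) _ _ hx)
  adj_c₁ := hpℓ
  adj_c₂ := hpℓ'
  c₁_ne_c₂ := h.ℓ_ne_ℓ'
  eq_or_eq_of_adj _ hc := eq_or_eq_of_outdeg_eq_two (h.tree.outdeg_eq_two h.not_isReticulation
    (h.tree.adj_mem hpℓ).1 fun hp => h.tree.not_adj_of_isLeaf hp ℓ hpℓ) hpℓ hpℓ' h.ℓ_ne_ℓ' hc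
  eq_of_adj_of_adj _ _ ha ha' := h.tree.eq_of_adj_of_adj h.not_isReticulation ha ha'
  isChain a b hab hne := (h.emb.isPath a b hab).1.imp_of_mem_imp fun _ _ _ hd hcd =>
    ⟨hcd, fun e => hne (h.eq_of_mem_of_siblings hpℓ hab (.inl (e.2 ▸ hd))),
      fun e => hne (h.eq_of_mem_of_siblings hpℓ hab (.inr (e.2 ▸ hd)))⟩
  eq_append := hR
  getLast?_eq := hRw
  ne_nil := List.cons_ne_nil _ _
  mem_vertsM := (h.network.adj_mem h.adj_w_u).1
  isPath := h.isPath_detour hxw hyu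
  isPrivateVertex t ht htw htℓ := by
    simp only [List.mem_cons, List.not_mem_nil, or_false] at ht
    rcases ht with ht | ht | ht | ht
    · exact absurd ht htw
    · subst t
      exact ⟨h.notMem_image h.outdeg_u, fun _ _ hab hx => h.eq_of_mem_of_siblings hpℓ hab (.inl hx)⟩
    · subst t
      exact ⟨h.notMem_image h.outdeg_v, fun _ _ hab hx => h.eq_of_mem_of_siblings hpℓ hab (.inr hx)⟩
    · exact absurd (ht.trans (h.emb.map_leaf ℓ (h.isLeaf_of_isLeaf h.isLeaf_ℓ)).symm) htℓ

theorem displays_of_siblings (h : CaseA vertsN adjN rootN vertsT adjT rootT φ P w u v ℓ ℓ')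
    (hpℓ : adjT p ℓ) (hpℓ' : adjT p ℓ') (hxw : x ≠ w) (hyu : y ≠ u) :
    Displays vertsN (fun p q => adjN p q ∧ ¬ (p = x ∧ q = u) ∧ ¬ (p = y ∧ q = v)) vertsT adjT := by
  classical
  obtain ⟨R, hR, hRw⟩ := h.exists_eq_append hpℓ'
  exact (h.slideData hpℓ hpℓ' hxw hyu hR hRw).displays

end CaseA

end

theorem tcp_case_A_general {V : Type*}
    (vertsN : Set V) (adjN : V → V → Prop) (rootN : V)
    (vertsT : Set V) (adjT : V → V → Prop) (rootT : V)
    (hN : IsBinaryNetwork vertsN adjN rootN)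
    (hT : IsBinaryNetwork vertsT adjT rootT)
    (hTtree : ∀ x : V, ¬ IsReticulation adjT x)
    (hleaves : {x : V | IsLeaf vertsT adjT x} = {x : V | IsLeaf vertsN adjN x})
    (w u v ℓ ℓ' : V)
    (hwu : adjN w u) (hwl' : adjN w ℓ')
    (hl' : IsLeaf vertsN adjN ℓ')
    (hu : IsReticulation adjN u) (huv : adjN u v)
    (hv : IsReticulation adjN v) (hvl : adjN v ℓ) (hl : IsLeaf vertsN adjN ℓ)
    (hdisp : Displays vertsN adjN vertsT adjT) :
    (¬ (∃ p : V, adjT p ℓ ∧ adjT p ℓ') →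
        Displays vertsN (fun x y => adjN x y ∧ ¬ (x = w ∧ y = u))
          vertsT adjT) ∧
      ((∃ p : V, adjT p ℓ ∧ adjT p ℓ') →
        ∀ x y : V, adjN x u → x ≠ w → adjN y v → y ≠ u →
          Displays vertsN
            (fun p q => adjN p q ∧ ¬ (p = x ∧ q = u) ∧ ¬ (p = y ∧ q = v))
            vertsT adjT) := by
  obtain ⟨φ, P, E⟩ := IsDisplayEmbedding.of_displays hdisp
  have h : CaseA vertsN adjN rootN vertsT adjT rootT φ P w u v ℓ ℓ' :=
    ⟨E, hN, hT, hTtree, hleaves, hwu, hwl', huv, hvl, hu.2, hv.2, hl, hl'⟩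
  exact ⟨h.displays_of_not_siblings, fun ⟨_, hpℓ, hpℓ'⟩ _ _ _ hxw _ hyu =>
    h.displays_of_siblings hpℓ hpℓ' hxw hyu⟩

/-- Theorem 3(i): with `w` a tree vertex whose children are the reticulation
`u` and the leaf `ℓ'`, the child of `u` the reticulation `v`, and the child of
`v` the leaf `ℓ`: if `ℓ` and `ℓ'` are not siblings in `T`, delete the edge
`(w, u)`; otherwise delete the incoming edge of `u` other than `(w, u)` and
the incoming edge of `v` other than `(u, v)`. If `N` displays `T`, the
resulting network `N'` displays `T`. -/
theorem tcp_case_A {V : Type*}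
    (vertsN : Set V) (adjN : V → V → Prop) (rootN : V)
    (vertsT : Set V) (adjT : V → V → Prop) (rootT : V)
    (hN : IsBinaryNetwork vertsN adjN rootN)
    (hNS : NearlyStable vertsN adjN rootN)
    (hT : IsBinaryNetwork vertsT adjT rootT)
    (hTtree : ∀ x : V, ¬ IsReticulation adjT x)
    (hleaves : {x : V | IsLeaf vertsT adjT x} = {x : V | IsLeaf vertsN adjN x})
    (w u v ℓ ℓ' : V)
    (hw : IsTreeVertex adjN w) (hwu : adjN w u) (hwl' : adjN w ℓ')
    (hl' : IsLeaf vertsN adjN ℓ')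
    (hu : IsReticulation adjN u) (huv : adjN u v)
    (hv : IsReticulation adjN v) (hvl : adjN v ℓ) (hl : IsLeaf vertsN adjN ℓ)
    (hdisp : Displays vertsN adjN vertsT adjT) :
    (¬ (∃ p : V, adjT p ℓ ∧ adjT p ℓ') →
        Displays vertsN (fun x y => adjN x y ∧ ¬ (x = w ∧ y = u))
          vertsT adjT) ∧
      ((∃ p : V, adjT p ℓ ∧ adjT p ℓ') →
        ∀ x y : V, adjN x u → x ≠ w → adjN y v → y ≠ u →
          Displays vertsN
            (fun p q => adjN p q ∧ ¬ (p = x ∧ q = u) ∧ ¬ (p = y ∧ q = v))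
            vertsT adjT) :=
  tcp_case_A_general vertsN adjN rootN vertsT adjT rootT hN hT hTtree hleaves w u v ℓ ℓ' hwu hwl'
    hl' hu huv hv hvl hl hdisp
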